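/- Every finite tree with even diameter d ≥ 2 and exactly l ≥ 2 leaves has at most d·l/2 edges. -/

import Mathlib

open SimpleGraph

/-- The number of edges of a simple graph. -/
noncomputable def edgeCount {V : Type*} (G : SimpleGraph V) : ℕ := G.edgeSet.ncard

/-- The degree of a vertex. -/
noncomputable def deg {V : Type*} (G : SimpleGraph V) (v : V) : ℕ := (G.neighborSet v).ncard

/-- The number of leaves (vertices of degree 1). -/
noncomputable def leafCount {V : Type*} (G : SimpleGraph V) : ℕ := {v | deg G v = 1}.ncard

/-- The diameter: the maximum distance between two vertices. -/
noncomputable def treeDiam {V : Type*} (G : SimpleGraph V) : ℕ :=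
  sSup {n | ∃ u v : V, G.dist u v = n}

/-- κ(T) = (number of leaves) + (diameter) - 2. -/
noncomputable def kappa {V : Type*} (G : SimpleGraph V) : ℕ :=
  leafCount G + treeDiam G - 2

/-- A graph is a path graph if it is acyclic, preconnected, and has maximum degree ≤ 2
(the empty graph counts as a path). -/
def IsPathGraph {W : Type*} (H : SimpleGraph W) : Prop :=
  H.IsAcyclic ∧ H.Preconnected ∧
    ∀ v a b c : W, H.Adj v a → H.Adj v b → H.Adj v c → a = b ∨ a = c ∨ b = c

/-- A caterpillar is a tree whose non-leaf vertices induce a path. -/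
def IsCaterpillar {V : Type*} (G : SimpleGraph V) : Prop :=
  G.IsTree ∧ IsPathGraph (G.induce {v | 2 ≤ deg G v})

/-- The quotient graph of `G` along a map `c` on vertices: two images are adjacent iff
they are distinct and some edge of `G` joins their fibers. -/
def quotientGraph {V W : Type*} (G : SimpleGraph V) (c : V → W) : SimpleGraph W where
  Adj a b := a ≠ b ∧ ∃ u v : V, c u = a ∧ c v = b ∧ G.Adj u v
  symm := by
    constructor
    rintro a b ⟨hne, u, v, hu, hv, h⟩
    exact ⟨hne.symm, v, u, hv, hu, h.symm⟩
  loopless := by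
    constructor
    rintro a ⟨hne, -⟩
    exact hne rfl

/-- A spider is a tree with at most one vertex of degree greater than 2. -/
def IsSpider {V : Type*} (G : SimpleGraph V) : Prop :=
  G.IsTree ∧ ∀ u v : V, 3 ≤ deg G u → 3 ≤ deg G v → u = v

/-- `k` is the maximum number of edges of a vertex-induced subgraph of `G`
that is a caterpillar. -/
def MaxInducedCaterpillar {V : Type*} (G : SimpleGraph V) (k : ℕ) : Prop :=
  IsGreatest {j : ℕ | ∃ s : Set V, IsCaterpillar (G.induce s) ∧ edgeCount (G.induce s) = j} k

/-!
Write `d = 2k`. The midpoint `c` of a diametral path is within distance `k` of every vertex,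
since any walk between the ends of that path passes through `c`. For `w ≠ c`, a vertex `ℓ(w)`
farthest from `c` among those whose geodesic from `c` passes through `w` is a leaf. Since
geodesics in a tree are unique, `w ↦ (ℓ(w), dist c w)` is injective into `leaves × [1, k]`, so
the tree has at most `l·k + 1` vertices, hence at most `k·l = d·l/2` edges.
-/

namespace SimpleGraph

open Walk

variable {V : Type*} {G : SimpleGraph V}

lemma IsAcyclic.length_eq_dist_of_isPath (hG : G.IsAcyclic) {u v : V} {p : G.Walk u v}
    (hp : p.IsPath) : p.length = G.dist u v := by
  obtain ⟨q, hq, hql⟩ := p.reachable.exists_path_of_dist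
  rw [← hql, Subtype.mk.inj ((hG.subsingleton_path u v).elim ⟨p, hp⟩ ⟨q, hq⟩)]

lemma IsAcyclic.dist_add_dist_of_mem_support (hG : G.IsAcyclic) {u v x : V} {p : G.Walk u v}
    (hp : p.IsPath) (hx : x ∈ p.support) : G.dist u x + G.dist x v = G.dist u v := by
  classical
  rw [← hG.length_eq_dist_of_isPath hp, ← hG.length_eq_dist_of_isPath (hp.takeUntil hx),
    ← hG.length_eq_dist_of_isPath (hp.dropUntil hx), ← length_append, take_spec]

lemma IsAcyclic.mem_support_of_isPath (hG : G.IsAcyclic) {u v x : V} {p : G.Walk u v}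
    (hp : p.IsPath) (q : G.Walk u v) (hx : x ∈ p.support) : x ∈ q.support := by
  classical
  rw [Subtype.mk.inj ((hG.subsingleton_path u v).elim ⟨p, hp⟩ ⟨q.bypass, q.bypass_isPath⟩)] at hx
  exact q.support_bypass_subset_support hx

lemma IsTree.getVert_dist_of_dist_add_dist (hG : G.IsTree) {u v x : V} {p : G.Walk u v}
    (hp : p.IsPath) (hx : G.dist u x + G.dist x v = G.dist u v) : p.getVert (G.dist u x) = x := by
  obtain ⟨q₁, hq₁⟩ := hG.connected.exists_walk_length_eq_dist u x
  obtain ⟨q₂, hq₂⟩ := hG.connected.exists_walk_length_eq_dist x v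
  have hq : (q₁.append q₂).IsPath :=
    (q₁.append q₂).isPath_of_length_eq_dist (by rw [length_append]; omega)
  rw [Subtype.mk.inj ((hG.isAcyclic.subsingleton_path u v).elim ⟨p, hp⟩ ⟨_, hq⟩), ← hq₁,
    getVert_append]
  simp

lemma IsTree.eq_of_dist_add_dist (hG : G.IsTree) {u v x y : V}
    (hx : G.dist u x + G.dist x v = G.dist u v) (hy : G.dist u y + G.dist y v = G.dist u v)
    (hxy : G.dist u x = G.dist u y) : x = y := by
  obtain ⟨p, hp, -⟩ := hG.connected.exists_path_of_dist u v
  rw [← hG.getVert_dist_of_dist_add_dist hp hx, ← hG.getVert_dist_of_dist_add_dist hp hy, hxy]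

lemma IsTree.exists_forall_dist_le (hG : G.IsTree) {u v : V} {k : ℕ} (huv : G.dist u v = 2 * k)
    (hdiam : ∀ x y, G.dist x y ≤ 2 * k) : ∃ c, ∀ w, G.dist c w ≤ k := by
  obtain ⟨P, hP, hPl⟩ := hG.connected.exists_path_of_dist u v
  refine ⟨P.getVert k, fun w => ?_⟩
  have hmid := hG.isAcyclic.dist_add_dist_of_mem_support hP (P.getVert_mem_support k)
  have hu : G.dist u (P.getVert k) ≤ k := (dist_le (P.take k)).trans (by simp [take_length])
  have hv : G.dist (P.getVert k) v ≤ k := (dist_le (P.drop k)).trans (by simp [drop_length]; omega)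
  obtain ⟨Qu, hQu, -⟩ := hG.connected.exists_path_of_dist u w
  obtain ⟨Qv, hQv, -⟩ := hG.connected.exists_path_of_dist w v
  rcases (mem_support_append_iff _ _).mp
      (hG.isAcyclic.mem_support_of_isPath hP (Qu.append Qv) (P.getVert_mem_support k)) with h | h
  · have := hG.isAcyclic.dist_add_dist_of_mem_support hQu h
    have := hdiam u w
    omega
  · have := hG.isAcyclic.dist_add_dist_of_mem_support hQv h
    have := hdiam w v
    rw [dist_comm]
    omega

lemma IsTree.exists_leaf_dist_add_dist [Finite V] (hG : G.IsTree) {c v : V} (hv : v ≠ c) :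
    ∃ ℓ, deg G ℓ = 1 ∧ G.dist c v + G.dist v ℓ = G.dist c ℓ := by
  obtain ⟨ℓ, hℓ, hmax⟩ := Set.exists_max_image {w | G.dist c v + G.dist v w = G.dist c w}
    (G.dist c) (Set.toFinite _) ⟨v, by simp⟩
  refine ⟨ℓ, ?_, hℓ⟩
  have hcv := hG.connected.pos_dist_of_ne hv.symm
  have hcℓ : c ≠ ℓ := by
    rintro rfl
    simp only [Set.mem_ofPred_eq, dist_self] at hℓ
    omega
  -- a neighbour of `ℓ` farther from `c` would lie beyond `v` and contradict the choice of `ℓ`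
  have hnbr : ∀ x, G.Adj ℓ x → G.dist c x + G.dist x ℓ = G.dist c ℓ := by
    intro x hx
    have hxℓ : G.dist x ℓ = 1 := dist_eq_one_iff_adj.mpr hx.symm
    rcases hG.dist_eq_dist_add_one_of_adj c hx with h | h
    · omega
    · have h₁ := hG.connected.dist_triangle (u := c) (v := v) (w := x)
      have h₂ := hG.connected.dist_triangle (u := v) (v := ℓ) (w := x)
      rw [dist_comm (u := ℓ), hxℓ] at h₂
      have := hmax x (by simp only [Set.mem_ofPred_eq] at hℓ ⊢; omega)
      omega
  obtain ⟨p, -, -⟩ := hG.connected.exists_path_of_dist ℓ c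
  have hsnd := p.adj_snd (not_nil_of_ne hcℓ.symm)
  rw [deg, Set.ncard_eq_one]
  refine ⟨p.snd, Set.ext fun x => ⟨fun hx => ?_, fun hx => hx ▸ hsnd⟩⟩
  have hx' : G.Adj ℓ x := hx
  have h₁ := hnbr x hx'
  have h₂ := hnbr _ hsnd
  refine hG.eq_of_dist_add_dist h₁ h₂ ?_
  rw [dist_eq_one_iff_adj.mpr hx'.symm] at h₁
  rw [dist_eq_one_iff_adj.mpr hsnd.symm] at h₂
  omega

lemma IsTree.edgeCount_add_one [Finite V] (hG : G.IsTree) : edgeCount G + 1 = Nat.card V :=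
  (isTree_iff_connected_and_card.mp hG).2

lemma IsTree.edgeCount_le_leafCount_mul [Finite V] (hG : G.IsTree) {c : V} {k : ℕ}
    (hc : ∀ w, G.dist c w ≤ k) : edgeCount G ≤ leafCount G * k := by
  choose! f hf using fun w (hw : w ∈ ({c}ᶜ : Set V)) => hG.exists_leaf_dist_add_dist hw
  have hmaps : ∀ w ∈ ({c}ᶜ : Set V),
      (f w, G.dist c w) ∈ {v | deg G v = 1} ×ˢ Set.Icc 1 k :=
    fun w hw => ⟨(hf w hw).1, hG.connected.pos_dist_of_ne (Ne.symm hw), hc w⟩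
  have hinj : Set.InjOn (fun w => (f w, G.dist c w)) {c}ᶜ := by
    intro w hw w' hw' h
    obtain ⟨hfw, hdw⟩ := Prod.mk.inj h
    exact hG.eq_of_dist_add_dist (hf w hw).2 (hfw ▸ (hf w' hw').2) hdw
  calc edgeCount G = ({c}ᶜ : Set V).ncard := by
        rw [Set.ncard_compl, Set.ncard_singleton, ← hG.edgeCount_add_one, Nat.add_sub_cancel]
    _ ≤ ({v | deg G v = 1} ×ˢ Set.Icc 1 k).ncard := Set.ncard_le_ncard_of_injOn _ hmaps hinj
    _ = leafCount G * k := by rw [Set.ncard_prod, Set.ncard_Icc_nat, Nat.add_sub_cancel, leafCount]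

lemma Connected.treeDiam_eq_diam [Finite V] (hG : G.Connected) : treeDiam G = G.diam := by
  have := hG.nonempty
  have hfin : G.ediam ≠ ⊤ := connected_iff_ediam_ne_top.mp hG
  obtain ⟨u, v, huv⟩ := G.exists_dist_eq_diam
  refine le_antisymm (csSup_le ⟨_, u, v, rfl⟩ ?_) (le_csSup ⟨G.diam, ?_⟩ ⟨u, v, huv⟩) <;>
    exact fun _ ⟨x, y, hxy⟩ => hxy ▸ dist_le_diam hfin

end SimpleGraph

theorem tree_edge_bound_even_diam_general
    {V : Type*} [Fintype V] (G : SimpleGraph V) (hG : G.IsTree)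
    (d l : ℕ) (hdeven : Even d)
    (hdiam : treeDiam G = d) (hleaf : leafCount G = l) :
    edgeCount G ≤ d * l / 2 := by
  obtain ⟨k, rfl⟩ := hdeven
  rw [hG.connected.treeDiam_eq_diam, ← two_mul] at hdiam
  have := hG.connected.nonempty
  have hfin : G.ediam ≠ ⊤ := connected_iff_ediam_ne_top.mp hG.connected
  obtain ⟨u, v, huv⟩ := G.exists_dist_eq_diam
  obtain ⟨c, hc⟩ := hG.exists_forall_dist_le (huv.trans hdiam) fun x y => hdiam ▸ dist_le_diam hfin
  calc edgeCount G ≤ l * k := hleaf ▸ hG.edgeCount_le_leafCount_mul hc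
    _ = (k + k) * l / 2 := by
      rw [← two_mul, mul_assoc, Nat.mul_div_cancel_left _ two_pos, mul_comm]

/-- Every finite tree with even diameter `d ≥ 2` and exactly `l ≥ 2` leaves
has at most `d·l/2` edges. -/
theorem tree_edge_bound_even_diam
    {V : Type*} [Fintype V] (G : SimpleGraph V) (hG : G.IsTree)
    (d l : ℕ) (hdeven : Even d) (hd : 2 ≤ d) (hl : 2 ≤ l)
    (hdiam : treeDiam G = d) (hleaf : leafCount G = l) :
    edgeCount G ≤ d * l / 2 :=
  tree_edge_bound_even_diam_general G hG d l hdeven hdiam hleaf
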